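/- If P_G decomposes via a hyperplane H into P_G ∩ H^{(+)} and P_G ∩ H^{(-)}, then both pieces are themselves edge polytopes: there exist connected spanning subgraphs G_+ and G_- of G with P_G ∩ H^{(+)} = P_{G_+} and P_G ∩ H^{(-)} = P_{G_-}, where E(G_+) = {e : s_H(e) ≥ 0} and E(G_-) = {e : s_H(e) ≤ 0}. -/

import Mathlib

/-!
Every lattice point of `P_G` is a `0/1`-vector, hence a vertex of the unit cube containing `P_G`,
hence a vertex of `P_G`, i.e. some `ρ(e)`. As the vertices of `P_G ∩ H^{(±)}` are lattice points,
they are the `ρ(e)` with `±s_H(e) ≥ 0`, and Krein–Milman gives `P_G ∩ H^{(±)} = P_{G_±}`.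

Every `x ∈ P_{G'}` satisfies `x_v ≤ ∑_{t ∼ v} x_t`, summed over the `G'`-neighbours of `v`.
If `G_+` were disconnected, a `G`-edge `vw` leaving a component `C` of `G_+` has `s_H(vw) < 0`;
mixing `ρ(vw)` with `ρ(pq)` for an edge `pq` with `s_H(pq) > 0` outside `C` (one exists since
`H` cuts `P_G`) gives a point of `P_G ∩ H = P_{G_+}` with mass at `v` but none at the
neighbours of `v` in `G_+`.
-/

open scoped BigOperators

/-- `ρ(i,j) = e_i + e_j` -/
noncomputable def rho {d : ℕ} (i j : Fin d) : Fin d → ℝ :=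
  fun t => (if t = i then 1 else 0) + (if t = j then 1 else 0)

/-- The edge polytope of a graph `G` on `[d]`. -/
noncomputable def edgePolytope {d : ℕ} (G : SimpleGraph (Fin d)) : Set (Fin d → ℝ) :=
  convexHull ℝ {x | ∃ i j, G.Adj i j ∧ x = rho i j}

/-- dot product -/
def dotp {d : ℕ} (a x : Fin d → ℝ) : ℝ := ∑ t, a t * x t

/-- a polytope is integral if all its vertices (extreme points) are lattice points -/
def IsIntegralSet {d : ℕ} (P : Set (Fin d → ℝ)) : Prop :=
  ∀ x ∈ Set.extremePoints ℝ P, ∀ t, ∃ z : ℤ, x t = (z : ℝ)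

/-- The hyperplane `a·x = b` decomposes `P`: it meets the relative interior of `P`,
both open sides meet `P`, and both closed half-space pieces are integral. -/
def Decomposes {d : ℕ} (P : Set (Fin d → ℝ)) (a : Fin d → ℝ) (b : ℝ) : Prop :=
  (∃ x ∈ intrinsicInterior ℝ P, dotp a x = b) ∧
  (∃ y ∈ P, dotp a y < b) ∧ (∃ y ∈ P, b < dotp a y) ∧
  IsIntegralSet (P ∩ {x | b ≤ dotp a x}) ∧
  IsIntegralSet (P ∩ {x | dotp a x ≤ b})

section

variable {d : ℕ}

lemma rho_comm (i j : Fin d) : rho i j = rho j i :=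
  add_comm _ _

lemma rho_nonneg (i j t : Fin d) : 0 ≤ rho i j t := by
  unfold rho
  positivity

lemma rho_apply_left {i j : Fin d} (h : i ≠ j) : rho i j i = 1 := by
  simp [rho, h]

lemma rho_apply_right {i j : Fin d} (h : i ≠ j) : rho i j j = 1 := by
  rw [rho_comm, rho_apply_left h.symm]

lemma rho_apply_of_ne {i j t : Fin d} (hi : t ≠ i) (hj : t ≠ j) : rho i j t = 0 := by
  simp [rho, hi, hj]

lemma dotp_rho (a : Fin d → ℝ) (i j : Fin d) : dotp a (rho i j) = a i + a j := by
  simp [dotp, rho, mul_add, Finset.sum_add_distrib]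

lemma dotp_neg (a x : Fin d → ℝ) : dotp (-a) x = -dotp a x :=
  neg_dotProduct a x

lemma isLinearMap_dotp (a : Fin d → ℝ) : IsLinearMap ℝ (dotp a) :=
  ⟨dotProduct_add a, fun c x => dotProduct_smul c a x⟩

lemma continuous_dotp (a : Fin d → ℝ) : Continuous (dotp a) :=
  continuous_const.dotProduct continuous_id

lemma exists_convex_combination_eq_zero {s₀ s₁ : ℝ} (h₀ : s₀ < 0) (h₁ : 0 < s₁) :
    ∃ ε : ℝ, 0 < ε ∧ ε < 1 ∧ ε * s₀ + (1 - ε) * s₁ = 0 := by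
  have hd : 0 < s₁ - s₀ := by linarith
  refine ⟨s₁ / (s₁ - s₀), div_pos h₁ hd, (div_lt_one hd).2 (by linarith), ?_⟩
  field_simp
  ring

section Polytope

variable (G : SimpleGraph (Fin d))

lemma rho_mem_edgePolytope {i j : Fin d} (h : G.Adj i j) : rho i j ∈ edgePolytope G :=
  subset_convexHull ℝ _ ⟨i, j, h, rfl⟩

lemma edgePolytope_subset_of_rho_mem {K : Set (Fin d → ℝ)} (hK : Convex ℝ K)
    (h : ∀ i j, G.Adj i j → rho i j ∈ K) : edgePolytope G ⊆ K :=
  convexHull_min (by rintro _ ⟨i, j, hij, rfl⟩; exact h i j hij) hK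

lemma isCompact_edgePolytope : IsCompact (edgePolytope G) := by
  have hfin : {x | ∃ i j, G.Adj i j ∧ x = rho i j}.Finite := by
    refine (Set.finite_range fun p : Fin d × Fin d => rho p.1 p.2).subset ?_
    rintro _ ⟨i, j, -, rfl⟩
    exact ⟨(i, j), rfl⟩
  exact hfin.isCompact_convexHull ℝ

lemma edgePolytope_subset_cube : edgePolytope G ⊆ Set.univ.pi fun _ => Set.Icc 0 1 := by
  refine edgePolytope_subset_of_rho_mem G (convex_pi fun _ _ => convex_Icc 0 1)
    fun i j hij t _ => ?_
  have := hij.ne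
  constructor <;> unfold rho <;> split_ifs <;> simp_all

lemma exists_adj_eq_rho_of_mem_edgePolytope_of_int {x : Fin d → ℝ} (hx : x ∈ edgePolytope G)
    (hint : ∀ t, ∃ z : ℤ, x t = z) : ∃ i j, G.Adj i j ∧ x = rho i j := by
  have hcube := edgePolytope_subset_cube G
  have h01 : ∀ t, x t ∈ ({0, 1} : Set ℝ) := by
    intro t
    obtain ⟨z, hz⟩ := hint t
    obtain ⟨h0, h1⟩ := hcube hx t (Set.mem_univ t)
    rw [hz] at h0 h1 ⊢
    have : z = 0 ∨ z = 1 := by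
      have : 0 ≤ z := by exact_mod_cast h0
      have : z ≤ 1 := by exact_mod_cast h1
      omega
    rcases this with rfl | rfl <;> simp
  have hext : x ∈ (Set.univ.pi fun _ : Fin d => Set.Icc (0 : ℝ) 1).extremePoints ℝ := by
    rw [extremePoints_pi]
    intro t _
    rw [Set.extremePoints_Icc zero_le_one]
    exact h01 t
  have hvert : x ∈ {y | ∃ i j, G.Adj i j ∧ y = rho i j} := extremePoints_convexHull_subset
    (inter_extremePoints_subset_extremePoints_of_subset hcube ⟨hx, hext⟩)
  exact hvert

lemma apply_le_sum_neighborFinset [DecidableRel G.Adj] (v : Fin d) {x : Fin d → ℝ}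
    (hx : x ∈ edgePolytope G) : x v ≤ ∑ t ∈ G.neighborFinset v, x t := by
  let f : (Fin d → ℝ) →ₗ[ℝ] ℝ :=
    LinearMap.proj (R := ℝ) (φ := fun _ : Fin d => ℝ) v -
      ∑ t ∈ G.neighborFinset v, LinearMap.proj (R := ℝ) (φ := fun _ : Fin d => ℝ) t
  have hf : ∀ y, f y = y v - ∑ t ∈ G.neighborFinset v, y t := by simp [f]
  suffices f x ≤ 0 by linarith [hf x]
  refine edgePolytope_subset_of_rho_mem G (convex_halfSpace_le f.isLinear 0)
    (fun i j hij => ?_) hx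
  have hsum (w : Fin d) (hw : G.Adj v w) : rho i j w ≤ ∑ t ∈ G.neighborFinset v, rho i j t :=
    Finset.single_le_sum (fun t _ => rho_nonneg i j t) ((G.mem_neighborFinset v w).2 hw)
  have hne := hij.ne
  show f (rho i j) ≤ 0
  rw [hf]
  by_cases hvi : v = i
  · subst hvi
    linarith [hsum j hij, rho_apply_left hne, rho_apply_right hne]
  by_cases hvj : v = j
  · subst hvj
    linarith [hsum i hij.symm, rho_apply_left hne, rho_apply_right hne]
  linarith [rho_apply_of_ne hvi hvj,
    Finset.sum_nonneg fun t (_ : t ∈ G.neighborFinset v) => rho_nonneg i j t]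

end Polytope

def edgeSubgraph (G : SimpleGraph (Fin d)) (K : Set (Fin d → ℝ)) : SimpleGraph (Fin d) where
  Adj i j := G.Adj i j ∧ rho i j ∈ K
  symm := ⟨fun i j h => ⟨h.1.symm, rho_comm i j ▸ h.2⟩⟩
  loopless := ⟨fun i h => G.loopless.irrefl i h.1⟩

lemma edgeSubgraph_halfSpace_adj (G : SimpleGraph (Fin d)) (a : Fin d → ℝ) (i j : Fin d) :
    (edgeSubgraph G {x | 0 ≤ dotp a x}).Adj i j ↔ G.Adj i j ∧ 0 ≤ a i + a j := by
  simp [edgeSubgraph, dotp_rho]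

theorem edgePolytope_edgeSubgraph (G : SimpleGraph (Fin d)) {K : Set (Fin d → ℝ)}
    (hKconv : Convex ℝ K) (hKclosed : IsClosed K) (hint : IsIntegralSet (edgePolytope G ∩ K)) :
    edgePolytope (edgeSubgraph G K) = edgePolytope G ∩ K := by
  have hconv : Convex ℝ (edgePolytope G ∩ K) := (convex_convexHull ℝ _).inter hKconv
  refine (edgePolytope_subset_of_rho_mem (edgeSubgraph G K) hconv fun i j hij =>
    ⟨rho_mem_edgePolytope G hij.1, hij.2⟩).antisymm ?_
  have hext : (edgePolytope G ∩ K).extremePoints ℝ ⊆ edgePolytope (edgeSubgraph G K) := by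
    intro x hx
    obtain ⟨hxP, hxK⟩ := extremePoints_subset hx
    obtain ⟨i, j, hij, rfl⟩ := exists_adj_eq_rho_of_mem_edgePolytope_of_int G hxP (hint x hx)
    exact rho_mem_edgePolytope _ ⟨hij, hxK⟩
  calc edgePolytope G ∩ K
      = closure (convexHull ℝ ((edgePolytope G ∩ K).extremePoints ℝ)) :=
        (closure_convexHull_extremePoints ((isCompact_edgePolytope G).inter_right hKclosed)
          hconv).symm
    _ ⊆ closure (edgePolytope (edgeSubgraph G K)) :=
        closure_mono (convexHull_min hext (convex_convexHull ℝ _))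
    _ = edgePolytope (edgeSubgraph G K) := (isCompact_edgePolytope _).isClosed.closure_eq

lemma edgePolytope_edgeSubgraph_halfSpace (G : SimpleGraph (Fin d)) (a : Fin d → ℝ)
    (hint : IsIntegralSet (edgePolytope G ∩ {x | 0 ≤ dotp a x})) :
    edgePolytope (edgeSubgraph G {x | 0 ≤ dotp a x}) = edgePolytope G ∩ {x | 0 ≤ dotp a x} :=
  edgePolytope_edgeSubgraph G (convex_halfSpace_ge (isLinearMap_dotp a) 0)
    (isClosed_le continuous_const (continuous_dotp a)) hint

lemma SimpleGraph.Connected.exists_adj_not_reachable {V : Type*} {G H : SimpleGraph V}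
    (hG : G.Connected) (hH : ¬H.Connected) (p : V) :
    ∃ v w, G.Adj v w ∧ ¬H.Reachable v w ∧ ¬H.Reachable v p := by
  obtain ⟨u, hu⟩ : ∃ u, ¬H.Reachable p u := by
    by_contra! h
    exact hH ((SimpleGraph.connected_iff H).2 ⟨fun u u' => (h u).symm.trans (h u'), ⟨p⟩⟩)
  obtain ⟨e, -, he, he'⟩ := (hG.preconnected p u).some.exists_boundary_dart
    {t | H.Reachable p t} (SimpleGraph.Reachable.refl p) hu
  exact ⟨e.snd, e.fst, e.adj.symm, fun h => he' (he.trans h.symm), fun h => he' h.symm⟩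

theorem connected_edgeSubgraph_halfSpace {G : SimpleGraph (Fin d)} (hG : G.Connected)
    (a : Fin d → ℝ) (hpos : ∃ y ∈ edgePolytope G, 0 < dotp a y)
    (hint : IsIntegralSet (edgePolytope G ∩ {x | 0 ≤ dotp a x})) :
    (edgeSubgraph G {x | 0 ≤ dotp a x}).Connected := by
  classical
  set H := edgeSubgraph G {x | 0 ≤ dotp a x}
  obtain ⟨p, q, hpq, hs₁⟩ : ∃ p q, G.Adj p q ∧ 0 < a p + a q := by
    by_contra! h
    obtain ⟨y, hy, hy₀⟩ := hpos
    have : dotp a y ≤ 0 :=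
      edgePolytope_subset_of_rho_mem G (convex_halfSpace_le (isLinearMap_dotp a) 0)
        (fun i j hij => by simpa [dotp_rho] using h i j hij) hy
    linarith
  have hpq' : H.Adj p q := (edgeSubgraph_halfSpace_adj G a p q).2 ⟨hpq, hs₁.le⟩
  by_contra hH
  obtain ⟨v, w, hvw, hnvw, hnvp⟩ := hG.exists_adj_not_reachable hH p
  have hnvq : ¬H.Reachable v q := fun h => hnvp (h.trans hpq'.symm.reachable)
  have hs₀ : a v + a w < 0 := by
    by_contra! h
    exact hnvw ((edgeSubgraph_halfSpace_adj G a v w).2 ⟨hvw, h⟩).reachable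
  obtain ⟨ε, hε₀, hε₁, hε⟩ := exists_convex_combination_eq_zero hs₀ hs₁
  set x := ε • rho v w + (1 - ε) • rho p q
  have hxH : x ∈ edgePolytope H := by
    rw [edgePolytope_edgeSubgraph_halfSpace G a hint]
    refine ⟨convex_convexHull ℝ _ (rho_mem_edgePolytope G hvw) (rho_mem_edgePolytope G hpq)
      hε₀.le (by linarith) (by ring), ?_⟩
    simp only [Set.mem_ofPred_eq, x, (isLinearMap_dotp a).map_add, (isLinearMap_dotp a).map_smul,
      dotp_rho, smul_eq_mul, hε, le_refl]
  have hxv : x v = ε := by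
    have hvp : v ≠ p := by rintro rfl; exact hnvp (.refl v)
    have hvq : v ≠ q := by rintro rfl; exact hnvq (.refl v)
    simp [x, rho_apply_left hvw.ne, rho_apply_of_ne hvp hvq]
  have hx_nbr : ∀ t ∈ H.neighborFinset v, x t = 0 := by
    intro t ht
    have hvt : H.Reachable v t := ((H.mem_neighborFinset v t).1 ht).reachable
    have hne (u : Fin d) (hu : ¬H.Reachable v u) : t ≠ u := fun h => hu (h ▸ hvt)
    simp [x, rho_apply_of_ne ((H.mem_neighborFinset v t).1 ht).ne.symm (hne w hnvw),
      rho_apply_of_ne (hne p hnvp) (hne q hnvq)]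
  have := apply_le_sum_neighborFinset H v hxH
  rw [hxv, Finset.sum_eq_zero hx_nbr] at this
  linarith

end

/-- the two pieces of a decomposition of the edge polytope are themselves
edge polytopes of connected spanning subgraphs. -/
theorem stmt6 {d : ℕ} (G : SimpleGraph (Fin d)) (hG : G.Connected) (a : Fin d → ℝ)
    (hdec : Decomposes (edgePolytope G) a 0) :
    ∃ Gp Gm : SimpleGraph (Fin d),
      (∀ i j, Gp.Adj i j ↔ G.Adj i j ∧ 0 ≤ a i + a j) ∧
      (∀ i j, Gm.Adj i j ↔ G.Adj i j ∧ a i + a j ≤ 0) ∧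
      Gp.Connected ∧ Gm.Connected ∧
      edgePolytope Gp = edgePolytope G ∩ {x | 0 ≤ dotp a x} ∧
      edgePolytope Gm = edgePolytope G ∩ {x | dotp a x ≤ 0} := by
  obtain ⟨-, ⟨y₁, hy₁, hay₁⟩, ⟨y₂, hy₂, hay₂⟩, hintPos, hintNeg⟩ := hdec
  have hneg : {x | dotp a x ≤ 0} = {x | 0 ≤ dotp (-a) x} := by
    ext x
    simp [dotp_neg]
  rw [hneg] at hintNeg ⊢
  refine ⟨edgeSubgraph G {x | 0 ≤ dotp a x}, edgeSubgraph G {x | 0 ≤ dotp (-a) x},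
    edgeSubgraph_halfSpace_adj G a, fun i j => ?_,
    connected_edgeSubgraph_halfSpace hG a ⟨y₂, hy₂, hay₂⟩ hintPos,
    connected_edgeSubgraph_halfSpace hG (-a) ⟨y₁, hy₁, by rw [dotp_neg]; linarith⟩ hintNeg,
    edgePolytope_edgeSubgraph_halfSpace G a hintPos,
    edgePolytope_edgeSubgraph_halfSpace G (-a) hintNeg⟩
  rw [edgeSubgraph_halfSpace_adj, Pi.neg_apply, Pi.neg_apply, ← neg_add, neg_nonneg]
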